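/- arXiv:2012.10123 — 2 statements merged into one kernel-verified Lean document; each statement's English description precedes it below -/
import Mathlib

section
/- Let k ≥ 1, let a, b ∈ {1, 2, ..., 2k+1} both be even, and let H_1, H_2, ..., H_{2k+1} be graphs each with n vertices. If the generalized lexicographic product P_{2k+1}[H_1, H_2, ..., H_{2k+1}] contains a Hamiltonian path starting in a vertex of the copy of H_a and ending in a vertex of the copy of H_b, then the sum over i = 0, ..., k of π(H_{2i+1}) is at least n + 1. -/
open SimpleGraph Finset

/-- The generalized lexicographic product `G[H₁,…,Hₘ]` of a graph `G` on vertices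
`u_1, …, u_m` (indexed by `Fin m`, so `u_i` corresponds to index `i-1`) and graphs
`H 0, …, H (m-1)`, each on `n` vertices: each vertex `i` of `G` is replaced by a copy
of `H i`, and all edges are added between the copies of `H i` and `H j` whenever
`i` and `j` are adjacent in `G`. -/
def genLexProd {m n : ℕ} (G : SimpleGraph (Fin m)) (H : Fin m → SimpleGraph (Fin n)) :
    SimpleGraph (Fin m × Fin n) where
  Adj p q := G.Adj p.1 q.1 ∨ (p.1 = q.1 ∧ (H p.1).Adj p.2 q.2)
  symm := by
    constructor
    rintro p q (h | ⟨h1, h2⟩)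
    · exact Or.inl h.symm
    · exact Or.inr ⟨h1.symm, by rw [← h1]; exact h2.symm⟩
  loopless := by
    constructor
    rintro p (h | ⟨-, h2⟩)
    · exact G.loopless.irrefl _ h
    · exact (H p.1).loopless.irrefl _ h2

/-- The lexicographic product `G[H]`. -/
def lexProd {α β : Type*} (G : SimpleGraph α) (H : SimpleGraph β) :
    SimpleGraph (α × β) where
  Adj p q := G.Adj p.1 q.1 ∨ (p.1 = q.1 ∧ H.Adj p.2 q.2)
  symm := by
    constructor
    rintro p q (h | ⟨h1, h2⟩)
    · exact Or.inl h.symm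
    · exact Or.inr ⟨h1.symm, h2.symm⟩
  loopless := by
    constructor
    rintro p (h | ⟨-, h2⟩)
    · exact G.loopless.irrefl _ h
    · exact H.loopless.irrefl _ h2

/-- A linear forest: an acyclic graph in which every vertex has degree at most `2`,
i.e. a forest all of whose components are paths. -/
def SimpleGraph.IsLinearForest {V : Type*} (F : SimpleGraph V) : Prop :=
  F.IsAcyclic ∧ ∀ v : V, (F.neighborSet v).ncard ≤ 2

/-- `piLF H` is `π(H)`: the maximum number of edges of a spanning linear forest of `H`.
(A spanning subgraph of `H` is a graph on the same vertex set all of whose edges are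
edges of `H`, i.e. a graph `F ≤ H`.) -/
noncomputable def piLF {V : Type*} (H : SimpleGraph V) : ℕ :=
  sSup {m : ℕ | ∃ F : SimpleGraph V, F ≤ H ∧ F.IsLinearForest ∧ F.edgeSet.ncard = m}

/-- A graph is traceable if it contains a hamiltonian path. -/
def SimpleGraph.IsTraceable {V : Type*} [DecidableEq V] (G : SimpleGraph V) : Prop :=
  ∃ (u v : V) (p : G.Walk u v), p.IsHamiltonian

/-- A graph is hamiltonian connected if any two distinct vertices are joined by a
hamiltonian path. -/
def SimpleGraph.IsHamiltonianConnected {V : Type*} [DecidableEq V] (G : SimpleGraph V) : Prop :=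
  ∀ u v : V, u ≠ v → ∃ p : G.Walk u v, p.IsHamiltonian

/-!
Call a vertex even if it lies in a copy of some `H_a` with `a` even; there are `k n` of them and
the Hamiltonian path starts and ends at one. Each even vertex has degree at most two on the path,
and the two endpoints degree one, so at most `2 k n - 2` of the `(2k+1) n - 1` path edges touch an
even vertex: at least `n + 1` path edges join two odd copies. Distinct odd copies are never
adjacent in `P_{2k+1}`, so each such edge lies inside one copy `H_{2i+1}`, and the path edges
inside that copy form a linear forest of `H_{2i+1}`, of at most `π(H_{2i+1})` edges.
-/

namespace SimpleGraph

variable {V W : Type*}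

theorem IsLinearForest.comap [Finite W] {F : SimpleGraph W} (hF : F.IsLinearForest) (f : V ↪ W) :
    (F.comap f).IsLinearForest := by
  refine ⟨hF.1.of_comap f, fun v => ?_⟩
  calc ((F.comap f).neighborSet v).ncard ≤ (F.neighborSet (f v)).ncard :=
        Set.ncard_le_ncard_of_injOn f (fun _ hw => hw) f.injective.injOn
    _ ≤ 2 := hF.2 (f v)

theorem ncard_edgeSet_le_piLF [Finite V] {F H : SimpleGraph V} (hFH : F ≤ H)
    (hF : F.IsLinearForest) : F.edgeSet.ncard ≤ piLF H :=
  le_csSup ⟨H.edgeSet.ncard, by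
    rintro _ ⟨F', hF'H, -, rfl⟩
    exact Set.ncard_le_ncard (edgeSet_mono hF'H)⟩ ⟨F, hFH, hF, rfl⟩

namespace Walk

variable {G : SimpleGraph V} {u v : V}

theorem IsPath.isAcyclic_spanningCoe_toSubgraph {p : G.Walk u v} (hp : p.IsPath) :
    p.toSubgraph.spanningCoe.IsAcyclic := by
  induction p with
  | nil => exact isAcyclic_bot.anti fun _ _ h => by simp at h
  | @cons x b y h q ih =>
    rw [cons_isPath_iff] at hp
    have hsplit : (cons h q).toSubgraph.spanningCoe = q.toSubgraph.spanningCoe ⊔ edge x b := by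
      ext c d
      simp [edge_adj, or_comm]
    rw [hsplit]
    refine (ih hp.1).sup_edge_of_not_reachable ?_
    rintro ⟨w⟩
    cases w with
    | nil => exact h.ne rfl
    | cons hadj _ => exact hp.2 (q.mem_verts_toSubgraph.mp hadj.fst_mem)

theorem IsPath.ncard_neighborSet_toSubgraph_le_two {p : G.Walk u v} (hp : p.IsPath) (w : V) :
    (p.toSubgraph.neighborSet w).ncard ≤ 2 := by
  by_cases hw : w ∈ p.support
  · obtain ⟨i, rfl, hi⟩ := mem_support_iff_exists_getVert.mp hw
    have hsub : p.toSubgraph.neighborSet (p.getVert i) ⊆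
        {p.getVert (i - 1), p.getVert (i + 1)} := by
      intro w' hw'
      obtain ⟨j, hj, hjlt⟩ := p.toSubgraph_adj_iff.mp hw'
      rcases Sym2.eq_iff.mp hj with ⟨h1, h2⟩ | ⟨h1, h2⟩
      · obtain rfl : j = i := hp.getVert_injOn (by simp; omega) (by simpa) h1
        exact Or.inr h2.symm
      · obtain rfl : j + 1 = i := hp.getVert_injOn (by simp; omega) (by simpa) h2
        exact Or.inl (by simpa using h1.symm)
    calc _ ≤ ({p.getVert (i - 1), p.getVert (i + 1)} : Set V).ncard := Set.ncard_le_ncard hsub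
      _ ≤ 2 := (Set.ncard_insert_le _ _).trans (by simp)
  · have hempty : p.toSubgraph.neighborSet w = ∅ := Set.eq_empty_of_forall_notMem fun _ hw' =>
      hw (p.mem_verts_toSubgraph.mp (Subgraph.Adj.fst_mem hw'))
    simp [hempty]

theorem IsPath.isLinearForest_spanningCoe_toSubgraph {p : G.Walk u v} (hp : p.IsPath) :
    p.toSubgraph.spanningCoe.IsLinearForest :=
  ⟨hp.isAcyclic_spanningCoe_toSubgraph, hp.ncard_neighborSet_toSubgraph_le_two⟩

theorem length_le_countP_support_dropLast_add [DecidableEq V] (p : G.Walk u v) (S : Finset V) :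
    p.length ≤ p.support.dropLast.countP (· ∈ S) + p.support.tail.countP (· ∈ S) +
      p.darts.countP (fun d => d.fst ∉ S ∧ d.snd ∉ S) := by
  rw [← map_fst_darts, ← map_snd_darts, List.countP_map, List.countP_map, ← length_darts]
  induction p.darts with
  | nil => simp
  | cons d l ih =>
    simp only [List.countP_cons, List.length_cons, Function.comp_apply]
    split_ifs <;> simp_all <;> omega

theorem IsHamiltonian.countP_support [Fintype V] [DecidableEq V] {p : G.Walk u v}
    (hp : p.IsHamiltonian) (S : Finset V) : p.support.countP (· ∈ S) = S.card := by
  rw [List.countP_eq_length_filter,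
    ← List.toFinset_card_of_nodup (hp.isPath.support_nodup.filter _), List.toFinset_filter,
    hp.toFinset_support]
  simp

theorem IsHamiltonian.card_add_one_le [Fintype V] [DecidableEq V] {p : G.Walk u v}
    (hp : p.IsHamiltonian) {S : Finset V} (hu : u ∈ S) (hv : v ∈ S) :
    Fintype.card V + 1 ≤ 2 * S.card + p.darts.countP (fun d => d.fst ∉ S ∧ d.snd ∉ S) := by
  have htail : p.support.tail.countP (· ∈ S) + 1 = S.card := by
    rw [← hp.countP_support S, ← p.cons_tail_support, List.tail_cons,
      List.countP_cons_of_pos (by simpa)]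
  have hdropLast : p.support.dropLast.countP (· ∈ S) + 1 = S.card := by
    rw [← hp.countP_support S, ← p.dropLast_support_concat, List.countP_append]
    simpa
  have hlen := hp.length_eq
  have hcard : 0 < Fintype.card V := Fintype.card_pos_iff.mpr ⟨u⟩
  have := p.length_le_countP_support_dropLast_add S
  omega

end Walk

end SimpleGraph

section genLexProd

variable {m n : ℕ} {G : SimpleGraph (Fin m)} {H : Fin m → SimpleGraph (Fin n)}

theorem genLexProd_adj_mk_mk_same {i : Fin m} {a b : Fin n} :
    (genLexProd G H).Adj (i, a) (i, b) ↔ (H i).Adj a b :=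
  ⟨fun h => h.resolve_left (G.loopless.irrefl i) |>.2, fun h => Or.inr ⟨rfl, h⟩⟩

variable {x y : Fin m × Fin n} {p : (genLexProd G H).Walk x y}

theorem SimpleGraph.Walk.IsPath.card_darts_within_copy_le (hp : p.IsPath) (i : Fin m) :
    (p.darts.toFinset.filter fun d => d.fst.1 = i ∧ d.snd.1 = i).card ≤ piLF (H i) := by
  let F := p.toSubgraph.spanningCoe.comap (Function.Embedding.sectR i (Fin n))
  have hFH : F ≤ H i := fun a b hab => genLexProd_adj_mk_mk_same.mp (p.toSubgraph.adj_sub hab)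
  have hF : F.IsLinearForest := hp.isLinearForest_spanningCoe_toSubgraph.comap _
  refine le_trans ?_ (ncard_edgeSet_le_piLF hFH hF)
  rw [← Set.ncard_coe_finset]
  refine Set.ncard_le_ncard_of_injOn (fun d => s(d.fst.2, d.snd.2)) ?_ ?_
  · rintro ⟨⟨⟨i₁, a⟩, ⟨i₂, b⟩⟩, _⟩ hd
    simp only [coe_filter, List.mem_toFinset, Set.mem_ofPred_eq] at hd
    obtain ⟨hd, rfl, rfl⟩ := hd
    exact p.adj_toSubgraph_iff_mem_edges.mpr (List.mem_map_of_mem hd)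
  · rintro ⟨⟨⟨i₁, a⟩, ⟨i₂, b⟩⟩, _⟩ hd ⟨⟨⟨i₁', a'⟩, ⟨i₂', b'⟩⟩, _⟩ hd' hab
    simp only [coe_filter, List.mem_toFinset, Set.mem_ofPred_eq] at hd hd'
    obtain ⟨hd, h₁, h₂⟩ := hd
    obtain ⟨hd', h₁', h₂'⟩ := hd'
    subst i₁ i₂ i₁' i₂'
    refine List.inj_on_of_nodup_map hp.isTrail.edges_nodup hd hd' ?_
    simpa using congrArg (Sym2.map (Prod.mk i)) hab

theorem SimpleGraph.Walk.IsPath.countP_darts_within_indepSet_le (hp : p.IsPath)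
    {I : Finset (Fin m)} (hI : G.IsIndepSet I) :
    p.darts.countP (fun d => d.fst.1 ∈ I ∧ d.snd.1 ∈ I) ≤ ∑ i ∈ I, piLF (H i) := by
  have hnodup : p.darts.Nodup := hp.isTrail.edges_nodup.of_map _
  rw [List.countP_eq_length_filter, ← List.toFinset_card_of_nodup (hnodup.filter _),
    List.toFinset_filter, card_eq_sum_card_fiberwise (f := fun d => d.fst.1) (t := I)
      fun d hd => by simp_all]
  refine sum_le_sum fun i _ => le_trans (card_le_card ?_) (hp.card_darts_within_copy_le i)
  intro d
  simp only [mem_filter, List.mem_toFinset, decide_eq_true_eq]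
  rintro ⟨⟨hd, h₁, h₂⟩, rfl⟩
  refine ⟨hd, rfl, ?_⟩
  rcases d.adj with hG | ⟨h, -⟩
  · exact absurd hG (hI h₁ h₂ hG.ne)
  · exact h.symm

end genLexProd

/-- The positions `0, 2, …, 2k` in `Fin (2k+1)`, i.e. the vertices `u_1, u_3, …, u_{2k+1}`. -/
def evenFin (k : ℕ) : Fin (k + 1) ↪ Fin (2 * k + 1) :=
  ⟨fun i => ⟨2 * i.1, by omega⟩, fun i j h => Fin.ext (by simpa using h)⟩

@[simp]
theorem val_evenFin {k : ℕ} (i : Fin (k + 1)) : (evenFin k i : ℕ) = 2 * i := rfl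

theorem isIndepSet_pathGraph_evenFin (k : ℕ) :
    (pathGraph (2 * k + 1)).IsIndepSet (univ.map (evenFin k)) := by
  rintro _ hi _ hj - hadj
  obtain ⟨i, -, rfl⟩ := mem_map.mp hi
  obtain ⟨j, -, rfl⟩ := mem_map.mp hj
  rw [pathGraph_adj] at hadj
  simp only [val_evenFin] at hadj
  omega

theorem card_compl_map_evenFin (k : ℕ) : (univ.map (evenFin k))ᶜ.card = k := by
  rw [card_compl, card_map, card_univ, Fintype.card_fin, Fintype.card_fin]
  omega

theorem notMem_map_evenFin_of_odd {k : ℕ} {i : Fin (2 * k + 1)} (hi : Odd (i : ℕ)) :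
    i ∉ univ.map (evenFin k) := by
  rintro hmem
  obtain ⟨j, -, rfl⟩ := mem_map.mp hmem
  rw [val_evenFin] at hi
  exact Nat.not_odd_iff_even.mpr (even_two_mul _) hi

theorem odd_path_hampath_even_even (k n : ℕ) (a b : ℕ)
    (ha1 : 1 ≤ a) (hb1 : 1 ≤ b)
    (hae : Even a) (hbe : Even b)
    (H : Fin (2 * k + 1) → SimpleGraph (Fin n))
    (x y : Fin (2 * k + 1) × Fin n)
    (p : (genLexProd (pathGraph (2 * k + 1)) H).Walk x y) (hp : p.IsHamiltonian)
    (hx : (x.1 : ℕ) = a - 1) (hy : (y.1 : ℕ) = b - 1) :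
    n + 1 ≤ ∑ i : Fin (k + 1), piLF (H ⟨2 * i.1, by have := i.2; omega⟩) := by
  have hendpoint {z : Fin (2 * k + 1) × Fin n} {c : ℕ} (hc : 1 ≤ c) (hce : Even c)
      (hz : (z.1 : ℕ) = c - 1) : z ∈ (univ.map (evenFin k))ᶜ ×ˢ univ :=
    mem_product.mpr
      ⟨mem_compl.mpr (notMem_map_evenFin_of_odd (hz ▸ Nat.Even.sub_odd hc hce odd_one)), mem_univ _⟩
  have hcount := hp.card_add_one_le (hendpoint ha1 hae hx) (hendpoint hb1 hbe hy)
  rw [List.countP_congr (by simp) (q := fun d =>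
    d.fst.1 ∈ univ.map (evenFin k) ∧ d.snd.1 ∈ univ.map (evenFin k))] at hcount
  simp only [Fintype.card_prod, Fintype.card_fin, card_product, card_compl_map_evenFin,
    card_univ] at hcount
  have hcopies := hp.isPath.countP_darts_within_indepSet_le (isIndepSet_pathGraph_evenFin k)
  rw [sum_map] at hcopies
  have : (2 * k + 1) * n = 2 * (k * n) + n := by ring
  exact le_trans (by omega) hcopies
end

section
/- For n ≥ 4 even and any graph H, the lexicographic product P_n[H] is Hamiltonian if and only if H has at least one edge. -/
open SimpleGraph Finset

/-!
If `H` has an edge `ab`, list the vertices of `P_n` as `v₀, …, v_{n-1}`. A Hamiltonian cycle of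
`P_n[H]` starts at `(v₀, b)`, snakes through all rows other than `a` over the column pairs
`{v₀, v₁}, {v₂, v₃}, …`, entering and leaving each pair in row `b` (this is where `n` even is
needed), steps from `(v_{n-1}, b)` to `(v_{n-1}, a)` and returns along row `a`.

If `H` has no edges, all neighbours of column `0` lie in column `1`, which has the same size.
Along a Hamiltonian cycle the predecessors of column `0` then exhaust column `1`, so the cycle
never leaves columns `0` and `1`; but column `2` exists.
-/

open Fin.NatCast in
theorem Fin.eq_univ_of_add_one_mem {N : ℕ} [NeZero N] {s : Finset (Fin N)} (hs : s.Nonempty)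
    (h : ∀ i ∈ s, i + 1 ∈ s) : s = Finset.univ := by
  obtain ⟨x, hx⟩ := hs
  have hk : ∀ k : ℕ, x + (k : Fin N) ∈ s := by
    intro k
    induction k with
    | zero => simpa using hx
    | succ k ih => simpa [← add_assoc] using h _ ih
  exact eq_univ_of_forall fun y => by simpa using hk (y - x).val

theorem Fin.union_eq_univ_of_card_le {N : ℕ} [NeZero N] {s t : Finset (Fin N)}
    (hs : s.Nonempty) (hsucc : ∀ i ∈ s, i + 1 ∈ t) (hpred : ∀ i ∈ s, i - 1 ∈ t)
    (hcard : #t ≤ #s) : s ∪ t = Finset.univ := by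
  have hpred_eq : s.image (· - 1) = t :=
    eq_of_subset_of_card_le (image_subset_iff.2 hpred)
      (by rwa [card_image_of_injective _ (sub_left_injective (b := 1))])
  refine Fin.eq_univ_of_add_one_mem (hs.mono subset_union_left) fun i hi => ?_
  rcases mem_union.1 hi with hi | hi
  · exact mem_union_right _ (hsucc i hi)
  · obtain ⟨j, hj, rfl⟩ := mem_image.1 (hpred_eq ▸ hi)
    simpa using mem_union_left t hj

namespace SimpleGraph

section Hamiltonian

variable {α : Type*} [Fintype α] [DecidableEq α] {G : SimpleGraph α}

theorem isHamiltonian_iff_cycleGraph_isContained (h3 : 3 ≤ Fintype.card α) :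
    G.IsHamiltonian ↔ cycleGraph (Fintype.card α) ⊑ G := by
  rw [cycleGraph_isContained_iff (by omega)]
  constructor
  · intro hG
    obtain ⟨v, p, hp⟩ := hG (by omega)
    exact ⟨v, p, hp.isCycle, hp.length_eq⟩
  · rintro ⟨v, p, hp, hlen⟩ -
    exact ⟨v, p, Walk.isHamiltonianCycle_iff_isCycle_and_length_eq.2 ⟨hp, hlen⟩⟩

theorem isHamiltonian_of_isChain (l : List α) (hmem : ∀ v, v ∈ l)
    (hlen : l.length = Fintype.card α) (h3 : 3 ≤ l.length) (hchain : l.IsChain G.Adj)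
    (hclose : ∀ x ∈ l.getLast?, ∀ y ∈ l.head?, G.Adj x y) : G.IsHamiltonian := by
  rw [isHamiltonian_iff_cycleGraph_isContained (hlen ▸ h3)]
  have hne : l ≠ [] := by rintro rfl; simp at h3
  let f : Fin (Fintype.card α) → α := fun i => l[i.val]
  have hf : f.Bijective := by
    refine (Fintype.bijective_iff_surjective_and_card f).2 ⟨fun v => ?_, by simp⟩
    obtain ⟨i, hi, rfl⟩ := List.mem_iff_getElem.1 (hmem v)
    exact ⟨⟨i, hlen ▸ hi⟩, rfl⟩
  have hsucc : ∀ u v, (v - u).val = 1 → G.Adj (f u) (f v) := by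
    intro u v huv
    rcases le_or_gt u v with hle | hlt
    · rw [Fin.coe_sub_iff_le.2 hle] at huv
      have := List.isChain_iff_getElem.1 hchain u (by omega)
      simpa [f, show v.val = u.val + 1 by omega] using this
    · rw [Fin.coe_sub_iff_lt.2 hlt] at huv
      have := hclose _ (List.getLast_mem_getLast? hne) _ (List.head_mem_head? hne)
      rw [List.getLast_eq_getElem, List.head_eq_getElem] at this
      simpa [f, show u.val = l.length - 1 by omega, show v.val = 0 by omega] using this
  exact ⟨⟨⟨f, fun huv => (cycleGraph_adj'.1 huv).elim (fun h => (hsucc _ _ h).symm)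
    (hsucc _ _)⟩, hf.1⟩⟩

theorem IsHamiltonian.union_eq_univ_of_card_le (hG : G.IsHamiltonian) {A B : Finset α}
    (hA : A.Nonempty) (hAB : ∀ a ∈ A, ∀ v, G.Adj a v → v ∈ B) (hcard : #B ≤ #A) :
    A ∪ B = Finset.univ := by
  obtain h3 | hsmall := le_or_gt 3 (Fintype.card α)
  · obtain ⟨f⟩ := (isHamiltonian_iff_cycleGraph_isContained h3).1 hG
    have : Nonempty α := ⟨hA.choose⟩
    let e := Equiv.ofBijective f
      ((Fintype.bijective_iff_injective_and_card f).2 ⟨f.injective, by simp⟩)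
    have hone : 1 % Fintype.card α = 1 := Nat.mod_eq_of_lt (by omega)
    have hadj : ∀ i, G.Adj (e (i - 1)) (e i) := fun i =>
      f.toHom.map_adj (cycleGraph_adj'.2 (Or.inr (by simp [hone])))
    have hcover := Fin.union_eq_univ_of_card_le (s := A.map e.symm.toEmbedding)
      (t := B.map e.symm.toEmbedding) hA.map ?_ ?_ (by simpa using hcard)
    · refine eq_univ_of_forall fun v => ?_
      have hv := hcover ▸ mem_univ (e.symm v)
      simpa using hv
    · intro i hi
      rw [mem_map_equiv] at hi ⊢
      simpa using hAB _ hi _ (by simpa using hadj (i + 1))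
    · intro i hi
      rw [mem_map_equiv] at hi ⊢
      exact hAB _ hi _ (hadj i).symm
  · have : Fintype.card α ≠ 2 := fun h => not_isHamiltonian_of_card_eq_two h hG
    have : Subsingleton α := Fintype.card_le_one_iff_subsingleton.1 (by omega)
    obtain ⟨a, ha⟩ := hA
    exact eq_univ_of_forall fun v => mem_union_left _ (Subsingleton.elim a v ▸ ha)

end Hamiltonian

section LexProd

variable {α β : Type*} {G : SimpleGraph α} {H : SimpleGraph β}

theorem not_isHamiltonian_lexProd_bot_of_pendant [Fintype α] [DecidableEq α] [Fintype β]
    [DecidableEq β] {u v w : α} (hv : ∀ x, G.Adj v x → x = w) (huv : u ≠ v) (huw : u ≠ w) :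
    ¬ (lexProd G (⊥ : SimpleGraph β)).IsHamiltonian := by
  intro hG
  obtain ⟨-, y⟩ := hG.connected.nonempty.some
  have hcover := hG.union_eq_univ_of_card_le (A := {v} ×ˢ univ) (B := {w} ×ˢ univ)
    ⟨(v, y), by simp⟩ ?_ (by simp)
  · rw [eq_univ_iff_forall] at hcover
    simpa [huv.symm, huw.symm] using hcover (u, y)
  · rintro ⟨x, c⟩ hx ⟨x', c'⟩ (hadj | ⟨-, hbot⟩)
    · rw [mem_product, mem_singleton] at hx ⊢
      exact ⟨hv _ (hx.1 ▸ hadj), mem_univ _⟩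
    · exact hbot.elim

def zigzagBlock (cs : List β) (b : β) (x y : α) : List (α × β) :=
  (x, b) :: (cs.flatMap (fun c => [(y, c), (x, c)]) ++ [(y, b)])

/-- Consumes `vs` two vertices at a time; a trailing odd vertex is dropped. -/
def zigzag (cs : List β) (b : β) : List α → List (α × β)
  | x :: y :: vs => zigzagBlock cs b x y ++ zigzag cs b vs
  | _ => []

variable {cs : List β} {b : β}

theorem isChain_zigzagBlock {x y : α} (hxy : G.Adj x y) :
    (zigzagBlock cs b x y).IsChain (lexProd G H).Adj := by
  suffices ∀ (cs : List β) (d : β),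
      ((x, d) :: (cs.flatMap (fun c => [(y, c), (x, c)]) ++ [(y, b)])).IsChain
        (lexProd G H).Adj from this cs b
  intro cs
  induction cs with
  | nil => exact fun d => List.isChain_pair.2 (Or.inl hxy)
  | cons c cs ih =>
    intro d
    simp only [List.flatMap_cons, List.cons_append, List.nil_append]
    exact .cons_cons (Or.inl hxy) (.cons_cons (Or.inl hxy.symm) (ih c))

theorem getLast?_zigzagBlock (x y : α) : (zigzagBlock cs b x y).getLast? = some (y, b) := by
  rw [zigzagBlock, ← List.cons_append, List.getLast?_concat]

theorem mem_zigzagBlock {x y v : α} {c : β} (hv : v = x ∨ v = y) (hc : c = b ∨ c ∈ cs) :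
    (v, c) ∈ zigzagBlock cs b x y := by
  rcases hc with rfl | hc
  · rcases hv with rfl | rfl <;> simp [zigzagBlock]
  · simp only [zigzagBlock, List.mem_cons, List.mem_append, List.mem_flatMap]
    exact Or.inr (Or.inl ⟨c, hc, by rcases hv with rfl | rfl <;> simp⟩)

theorem isChain_zigzag {vs : List α} (hvs : vs.IsChain G.Adj) :
    (zigzag cs b vs).IsChain (lexProd G H).Adj := by
  induction vs using zigzag.induct with
  | case1 x y vs ih =>
    obtain ⟨hxy, hyvs⟩ := List.isChain_cons_cons.1 hvs
    refine (isChain_zigzagBlock hxy).append (ih hyvs.tail) ?_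
    rw [getLast?_zigzagBlock]
    rcases vs with _ | ⟨z, _ | ⟨w, vs⟩⟩ <;> simp [zigzag, zigzagBlock]
    exact Or.inl (List.isChain_cons_cons.1 hyvs).1
  | case2 => simp [zigzag]

theorem getLast?_zigzag {vs : List α} (hvs : Even vs.length) :
    (zigzag cs b vs).getLast? = vs.getLast?.map (·, b) := by
  induction vs using zigzag.induct with
  | case1 x y vs ih =>
    rw [zigzag, List.getLast?_append, getLast?_zigzagBlock,
      ih (by simpa [Nat.even_add_one, parity_simps] using hvs)]
    cases h : vs.getLast? <;> simp [List.getLast?_cons, h]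
  | case2 vs h =>
    rcases vs with _ | ⟨x, _ | ⟨y, vs⟩⟩
    · rfl
    · simp at hvs
    · exact absurd rfl (h x y vs)

theorem length_zigzag {vs : List α} (hvs : Even vs.length) :
    (zigzag cs b vs).length = vs.length * (cs.length + 1) := by
  induction vs using zigzag.induct with
  | case1 x y vs ih =>
    simp [zigzag, zigzagBlock, ih (by simpa [Nat.even_add_one, parity_simps] using hvs)]
    ring
  | case2 vs h =>
    rcases vs with _ | ⟨x, _ | ⟨y, vs⟩⟩
    · simp [zigzag]
    · simp at hvs
    · exact absurd rfl (h x y vs)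

theorem mem_zigzag {vs : List α} (hvs : Even vs.length) {v : α} {c : β} (hv : v ∈ vs)
    (hc : c = b ∨ c ∈ cs) : (v, c) ∈ zigzag cs b vs := by
  induction vs using zigzag.induct with
  | case1 x y vs ih =>
    have hvs' : Even vs.length := by simpa [Nat.even_add_one, parity_simps] using hvs
    rw [zigzag, List.mem_append]
    rcases List.mem_cons.1 hv with hv | hv
    · exact Or.inl (mem_zigzagBlock (Or.inl hv) hc)
    rcases List.mem_cons.1 hv with hv | hv
    · exact Or.inl (mem_zigzagBlock (Or.inr hv) hc)
    · exact Or.inr (ih hvs' hv)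
  | case2 vs h =>
    rcases vs with _ | ⟨x, _ | ⟨y, vs⟩⟩
    · simp at hv
    · simp at hvs
    · exact absurd rfl (h x y vs)

theorem isHamiltonian_lexProd_of_isChain [Fintype α] [DecidableEq α] [Nonempty α]
    [Fintype β] [DecidableEq β] (vs : List α) (hmem : ∀ v, v ∈ vs)
    (hlen : vs.length = Fintype.card α) (heven : Even (Fintype.card α))
    (hvs : vs.IsChain G.Adj) {a b : β} (hab : H.Adj a b) : (lexProd G H).IsHamiltonian := by
  set cs := ((univ.erase a).erase b).toList
  have hcs : ∀ c, c ≠ a → c = b ∨ c ∈ cs := by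
    intro c hc
    by_cases c = b <;> simp [cs, *]
  have hcs_len : cs.length + 2 = Fintype.card β := by
    rw [length_toList, ← card_univ, ← card_erase_add_one (mem_univ a),
      ← card_erase_add_one (mem_erase.2 ⟨hab.ne', mem_univ b⟩)]
  have hvs_even : Even vs.length := hlen ▸ heven
  have hα : 2 ≤ Fintype.card α := by
    obtain ⟨k, hk⟩ := heven
    have := Fintype.card_pos (α := α)
    omega
  set L := zigzag cs b vs ++ (vs.map (·, a)).reverse
  have hL : L.length = Fintype.card α * Fintype.card β := by
    simp only [L, List.length_append, length_zigzag hvs_even, List.length_reverse,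
      List.length_map, ← hlen, ← hcs_len]
    ring
  refine isHamiltonian_of_isChain L (fun ⟨v, c⟩ => ?_) (by simp [hL]) (by rw [hL]; nlinarith)
    ?_ ?_
  · rw [List.mem_append, List.mem_reverse, List.mem_map]
    by_cases hc : c = a
    · exact Or.inr ⟨v, hmem v, by rw [hc]⟩
    · exact Or.inl (mem_zigzag hvs_even (hmem v) (hcs c hc))
  · refine (isChain_zigzag hvs).append
      (List.isChain_reverse.2 ((List.isChain_map _).2 (hvs.imp fun _ _ h => Or.inl h.symm))) ?_
    simp only [getLast?_zigzag hvs_even, List.head?_reverse, List.getLast?_map, Option.mem_map]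
    rintro _ ⟨v, hv, rfl⟩ _ ⟨w, hw, rfl⟩
    obtain rfl := Option.mem_unique hv hw
    exact Or.inr ⟨rfl, hab.symm⟩
  · obtain ⟨x, y, vs, rfl⟩ : ∃ x y vs', vs = x :: y :: vs' := by
      rcases vs with _ | ⟨x, _ | ⟨y, vs⟩⟩
      · simp at hlen; omega
      · simp at hvs_even
      · exact ⟨x, y, vs, rfl⟩
    simp only [L, List.getLast?_append, List.getLast?_reverse, List.head?_append, List.head?_map]
    simp only [zigzag, zigzagBlock, List.cons_append, List.head?_cons, Option.some_or,
      List.map_cons, Option.map_some, Option.mem_def, Option.some.injEq]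
    rintro _ rfl _ rfl
    exact Or.inr ⟨rfl, hab⟩

end LexProd

theorem isChain_finRange_pathGraph (n : ℕ) : (List.finRange n).IsChain (pathGraph n).Adj :=
  List.isChain_iff_getElem.2 fun i hi => by simp [pathGraph_adj]

end SimpleGraph

theorem even_path_lex_hamiltonian_iff (n : ℕ) (hn : 4 ≤ n) (hne : Even n)
    {β : Type*} [Fintype β] [DecidableEq β] (H : SimpleGraph β) :
    (lexProd (pathGraph n) H).IsHamiltonian ↔ H.edgeSet.Nonempty := by
  constructor
  · intro hG
    by_contra hH
    rw [Set.not_nonempty_iff_eq_empty, edgeSet_eq_empty] at hH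
    subst hH
    refine not_isHamiltonian_lexProd_bot_of_pendant (v := ⟨0, by omega⟩) (w := ⟨1, by omega⟩)
      (u := ⟨2, by omega⟩) (fun x hx => ?_) (Fin.ne_of_val_ne (by norm_num))
      (Fin.ne_of_val_ne (by norm_num)) hG
    rw [pathGraph_adj] at hx
    ext
    simp at hx ⊢
    omega
  · rintro ⟨e, he⟩
    induction e using Sym2.ind with
    | _ a b =>
      have : Nonempty (Fin n) := ⟨⟨0, by omega⟩⟩
      exact isHamiltonian_lexProd_of_isChain (List.finRange n) List.mem_finRange (by simp)
        (by simpa using hne) (isChain_finRange_pathGraph n) he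
end
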